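/- Let N ≥ 2 and d ≥ 1, and let Θ, G ∈ ℝ^{d×N}. The gradient of Ψ : ℝ^N → ℝ at any η ∈ ℝ^N equals (2/N)·((GᵀG ∘ L)η + (GᵀΘ ∘ L)𝟙). In particular, η ∈ ℝ^N is a critical point of Ψ if and only if (GᵀG ∘ L)η = −(GᵀΘ ∘ L)𝟙. -/

import Mathlib

open Matrix

/-- The Laplacian of the complete graph on `N` vertices: `L = N·I − 𝟙𝟙ᵀ`. -/
noncomputable def ggL (N : ℕ) : Matrix (Fin N) (Fin N) ℝ :=
  (N : ℝ) • (1 : Matrix (Fin N) (Fin N) ℝ) - Matrix.of fun _ _ => (1 : ℝ)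

/-- `Ψ(η) = Σᵢ ‖θ̃ᵢ − (1/N) Σⱼ θ̃ⱼ‖²` where `θ̃ᵢ = θᵢ + ηᵢ gᵢ`, viewed as a function
on `ℝ^N` with the Euclidean structure. -/
noncomputable def Psi {d N : ℕ} (Θ G : Matrix (Fin d) (Fin N) ℝ)
    (η : EuclideanSpace ℝ (Fin N)) : ℝ :=
  ∑ i : Fin N, ∑ k : Fin d,
    ((Θ k i + η i * G k i) - (1 / (N : ℝ)) * ∑ j : Fin N, (Θ k j + η j * G k j)) ^ 2

section aux

variable {d N : ℕ}

/-- The `m`-th component of the claimed gradient vector, simplified. -/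
lemma gg_rhs_component (hN0 : (N : ℝ) ≠ 0) (Θ G : Matrix (Fin d) (Fin N) ℝ)
    (η : Fin N → ℝ) (m : Fin N) :
    (((2 : ℝ) / (N : ℝ)) •
      ((((Gᵀ * G) ⊙ ggL N) *ᵥ η) + (((Gᵀ * Θ) ⊙ ggL N) *ᵥ fun _ => (1 : ℝ)))) m
    = 2 * ∑ k : Fin d, G k m *
        ((Θ k m + η m * G k m) - (1 / (N : ℝ)) * ∑ j : Fin N, (Θ k j + η j * G k j)) := by
  simp only [Pi.smul_apply, Pi.add_apply, mulVec, dotProduct, hadamard_apply, ggL,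
    Matrix.sub_apply, Matrix.smul_apply, Matrix.one_apply, Matrix.of_apply,
    Matrix.mul_apply, Matrix.transpose_apply, smul_eq_mul, mul_ite, mul_one, mul_zero]
  simp only [sub_mul, ite_mul, zero_mul, mul_sub, Finset.sum_sub_distrib,
    Finset.sum_ite_eq, Finset.mem_univ, if_true]
  simp only [mul_ite, mul_zero, mul_one, ite_mul, zero_mul, Finset.sum_ite_eq,
    Finset.mem_univ, if_true]
  have h1 : ∑ x : Fin N, (∑ k : Fin d, G k m * G k x) * η x
      = ∑ k : Fin d, ∑ x : Fin N, G k m * G k x * η x := by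
    rw [Finset.sum_comm]
    exact Finset.sum_congr rfl fun x _ => by rw [Finset.sum_mul]
  have h2 : (∑ x : Fin N, ∑ k : Fin d, G k m * Θ k x)
      = ∑ k : Fin d, ∑ x : Fin N, G k m * Θ k x := Finset.sum_comm
  rw [h1, h2]
  simp only [mul_sub, mul_add, Finset.mul_sum, Finset.sum_mul, Finset.sum_sub_distrib,
    Finset.sum_add_distrib]
  have e1 : (∑ i : Fin d, 2 / (N:ℝ) * (G i m * G i m * (N:ℝ) * η m))
      = ∑ i : Fin d, 2 * (G i m * (η m * G i m)) :=
    Finset.sum_congr rfl fun i _ => by field_simp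
  have e3 : (∑ i : Fin d, 2 / (N:ℝ) * (G i m * Θ i m * (N:ℝ)))
      = ∑ i : Fin d, 2 * (G i m * Θ i m) :=
    Finset.sum_congr rfl fun i _ => by field_simp
  have e2 : (∑ x : Fin d, ∑ i : Fin N, 2 / (N:ℝ) * (G x m * G x i * η i))
      = ∑ x : Fin d, ∑ i : Fin N, 2 * (G x m * (1 / (N:ℝ) * (η i * G x i))) :=
    Finset.sum_congr rfl fun x _ => Finset.sum_congr rfl fun i _ => by ring
  have e4 : (∑ x : Fin d, ∑ i : Fin N, 2 / (N:ℝ) * (G x m * Θ x i))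
      = ∑ x : Fin d, ∑ i : Fin N, 2 * (G x m * (1 / (N:ℝ) * Θ x i)) :=
    Finset.sum_congr rfl fun x _ => Finset.sum_congr rfl fun i _ => by ring
  rw [e1, e2, e3, e4]
  ring
end aux

section aux2
variable {d N : ℕ}

lemma gg_sum_A_zero (hN0 : (N : ℝ) ≠ 0) (Θ G : Matrix (Fin d) (Fin N) ℝ)
    (η : Fin N → ℝ) (k : Fin d) :
    ∑ i : Fin N, ((Θ k i + η i * G k i)
        - (1 / (N : ℝ)) * ∑ j : Fin N, (Θ k j + η j * G k j)) = 0 := by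
  rw [Finset.sum_sub_distrib, Finset.sum_const, Finset.card_univ, Fintype.card_fin,
    nsmul_eq_mul]
  field_simp
  ring

/-- The key scalar identity giving the value of the derivative at a test vector. -/
lemma gg_lhs_eq (hN0 : (N : ℝ) ≠ 0) (Θ G : Matrix (Fin d) (Fin N) ℝ)
    (η x : Fin N → ℝ) :
    (∑ i : Fin N, ∑ k : Fin d,
      (((Θ k i + η i * G k i) - (1 / (N : ℝ)) * ∑ j : Fin N, (Θ k j + η j * G k j)) *
          (G k i * x i - (1 / (N : ℝ)) * ∑ j : Fin N, G k j * x j) +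
       ((Θ k i + η i * G k i) - (1 / (N : ℝ)) * ∑ j : Fin N, (Θ k j + η j * G k j)) *
          (G k i * x i - (1 / (N : ℝ)) * ∑ j : Fin N, G k j * x j)))
    = ∑ m : Fin N, (2 * ∑ k : Fin d, G k m *
        ((Θ k m + η m * G k m) - (1 / (N : ℝ)) * ∑ j : Fin N, (Θ k j + η j * G k j))) * x m := by
  set A : Fin N → Fin d → ℝ := fun i k =>
    (Θ k i + η i * G k i) - (1 / (N : ℝ)) * ∑ j : Fin N, (Θ k j + η j * G k j) with hA
  have h0 : ∀ k : Fin d, ∑ i : Fin N, A i k = 0 := fun k => gg_sum_A_zero hN0 Θ G η k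
  have step1 : (∑ i : Fin N, ∑ k : Fin d,
      (A i k * (G k i * x i - (1 / (N : ℝ)) * ∑ j : Fin N, G k j * x j) +
       A i k * (G k i * x i - (1 / (N : ℝ)) * ∑ j : Fin N, G k j * x j)))
      = (∑ i : Fin N, ∑ k : Fin d, 2 * A i k * (G k i * x i))
        - ∑ k : Fin d, ∑ i : Fin N,
            (2 * ((1 / (N : ℝ)) * ∑ j : Fin N, G k j * x j)) * A i k := by
    rw [Finset.sum_comm (f := fun k i =>
      (2 * ((1 / (N : ℝ)) * ∑ j : Fin N, G k j * x j)) * A i k)]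
    rw [← Finset.sum_sub_distrib]
    refine Finset.sum_congr rfl fun i _ => ?_
    rw [← Finset.sum_sub_distrib]
    exact Finset.sum_congr rfl fun k _ => by ring
  rw [step1]
  have step2 : ∑ k : Fin d, ∑ i : Fin N,
      (2 * ((1 / (N : ℝ)) * ∑ j : Fin N, G k j * x j)) * A i k = 0 := by
    refine Finset.sum_eq_zero fun k _ => ?_
    rw [← Finset.mul_sum, h0 k, mul_zero]
  rw [step2, sub_zero]
  refine Finset.sum_congr rfl fun i _ => ?_
  rw [Finset.mul_sum, Finset.sum_mul]
  exact Finset.sum_congr rfl fun k _ => by ring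

end aux2

/-- The gradient of `Ψ` at `η` equals `(2/N)·((GᵀG ∘ L)η + (GᵀΘ ∘ L)𝟙)`; in particular
`η` is a critical point of `Ψ` iff `(GᵀG ∘ L)η = −(GᵀΘ ∘ L)𝟙`. -/
theorem gg_gradient_Psi {d N : ℕ} (hN : 2 ≤ N) (hd : 1 ≤ d)
    (Θ G : Matrix (Fin d) (Fin N) ℝ) :
    (∀ η : EuclideanSpace ℝ (Fin N),
        gradient (Psi Θ G) η =
          ((2 : ℝ) / (N : ℝ)) •
            ((((Gᵀ * G) ⊙ ggL N) *ᵥ η) + (((Gᵀ * Θ) ⊙ ggL N) *ᵥ fun _ => (1 : ℝ)))) ∧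
    (∀ η : EuclideanSpace ℝ (Fin N),
        gradient (Psi Θ G) η = 0 ↔
          ((Gᵀ * G) ⊙ ggL N) *ᵥ η = -(((Gᵀ * Θ) ⊙ ggL N) *ᵥ fun _ => (1 : ℝ))) := by
  have hNpos : 0 < N := lt_of_lt_of_le two_pos hN
  have hN0 : (N : ℝ) ≠ 0 := Nat.cast_ne_zero.mpr hNpos.ne'
  have key : ∀ η : EuclideanSpace ℝ (Fin N),
      gradient (Psi Θ G) η =
        ((2 : ℝ) / (N : ℝ)) •
          ((((Gᵀ * G) ⊙ ggL N) *ᵥ η) + (((Gᵀ * Θ) ⊙ ggL N) *ᵥ fun _ => (1 : ℝ))) := by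
    intro η
    set A : Fin N → Fin d → ℝ := fun i k =>
      (Θ k i + η i * G k i) - (1 / (N : ℝ)) * ∑ j : Fin N, (Θ k j + η j * G k j) with hAdef
    set ℓ : Fin N → Fin d → (EuclideanSpace ℝ (Fin N) →L[ℝ] ℝ) := fun i k =>
      G k i • (EuclideanSpace.proj i : EuclideanSpace ℝ (Fin N) →L[ℝ] ℝ)
        - (1 / (N : ℝ)) • ∑ j : Fin N,
            G k j • (EuclideanSpace.proj j : EuclideanSpace ℝ (Fin N) →L[ℝ] ℝ)
      with hldef
    have hf : ∀ i k, HasFDerivAt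
        (fun η' : EuclideanSpace ℝ (Fin N) => (Θ k i + η' i * G k i)
            - (1 / (N : ℝ)) * ∑ j : Fin N, (Θ k j + η' j * G k j))
        (ℓ i k) η := by
      intro i k
      have h1 : ∀ (i' : Fin N), HasFDerivAt
          (fun η' : EuclideanSpace ℝ (Fin N) => Θ k i' + η' i' * G k i')
          (G k i' • (EuclideanSpace.proj i' : EuclideanSpace ℝ (Fin N) →L[ℝ] ℝ)) η := by
        intro i'
        exact
          (((EuclideanSpace.proj i' : EuclideanSpace ℝ (Fin N) →L[ℝ] ℝ).hasFDerivAt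
            (x := η)).mul_const (G k i')).const_add (Θ k i')
      have h2 : HasFDerivAt
          (fun η' : EuclideanSpace ℝ (Fin N) => ∑ j : Fin N, (Θ k j + η' j * G k j))
          (∑ j : Fin N,
            G k j • (EuclideanSpace.proj j : EuclideanSpace ℝ (Fin N) →L[ℝ] ℝ)) η :=
        HasFDerivAt.fun_sum fun j _ => h1 j
      exact (h1 i).sub (h2.const_mul ((1 : ℝ) / (N : ℝ)))
    have hD : HasFDerivAt (Psi Θ G)
        (∑ i : Fin N, ∑ k : Fin d, (A i k • ℓ i k + A i k • ℓ i k)) η := by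
      refine HasFDerivAt.fun_sum fun i _ => HasFDerivAt.fun_sum fun k _ => ?_
      simp only [pow_two]
      exact (hf i k).mul (hf i k)
    have hDual : (∑ i : Fin N, ∑ k : Fin d, (A i k • ℓ i k + A i k • ℓ i k))
        = (InnerProductSpace.toDual ℝ (EuclideanSpace ℝ (Fin N)))
            (WithLp.toLp 2 (((2 : ℝ) / (N : ℝ)) •
              ((((Gᵀ * G) ⊙ ggL N) *ᵥ η) + (((Gᵀ * Θ) ⊙ ggL N) *ᵥ fun _ => (1 : ℝ))))) := by
      ext x
      simp only [ContinuousLinearMap.sum_apply, ContinuousLinearMap.add_apply,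
        ContinuousLinearMap.smul_apply, hldef, ContinuousLinearMap.sub_apply,
        PiLp.proj_apply, smul_eq_mul, InnerProductSpace.toDual_apply_apply,
        PiLp.inner_apply, RCLike.inner_apply, conj_trivial]
      simp only [gg_rhs_component hN0 Θ G η]
      exact (gg_lhs_eq hN0 Θ G η x).trans (Finset.sum_congr rfl fun m _ => mul_comm _ _)
    have hg : HasGradientAt (Psi Θ G)
        (WithLp.toLp 2 (((2 : ℝ) / (N : ℝ)) •
          ((((Gᵀ * G) ⊙ ggL N) *ᵥ η) + (((Gᵀ * Θ) ⊙ ggL N) *ᵥ fun _ => (1 : ℝ))))) η :=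
      hasGradientAt_iff_hasFDerivAt.mpr (hDual ▸ hD)
    rw [hg.gradient]
  refine ⟨key, fun η => ?_⟩
  rw [← (WithLp.ofLp_injective (p := 2) (V := Fin N → ℝ)).eq_iff, WithLp.ofLp_zero, key η, smul_eq_zero]
  have h2N : (2 : ℝ) / (N : ℝ) ≠ 0 := div_ne_zero two_ne_zero hN0
  simp only [h2N, false_or]
  constructor
  · intro h; rw [eq_neg_iff_add_eq_zero]; exact h
  · intro h; rw [eq_neg_iff_add_eq_zero] at h; exact h
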